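/- arXiv:1904.07790 — 2 statements merged into one kernel-verified Lean document; each statement's English description precedes it below -/
import Mathlib

section
/- For every positive finite n, ω₁ → (ω + 1)²_n: for every coloring of the pairs of countable ordinals in n colors there exists a subset of ω₁ of order type ω + 1 all of whose pairs receive the same color. -/
open Ordinal Set

noncomputable section Stmt7Aux

namespace Stmt7

attribute [local instance] Classical.propDecidable

universe u

/-- ω₁ -/
def Om : Ordinal.{u} := (Cardinal.aleph 1).ord

theorem om_isLimit : Order.IsSuccLimit Om.{u} :=
  Cardinal.isSuccLimit_ord (Cardinal.aleph0_le_aleph 1)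

theorem om_pos : (0 : Ordinal.{u}) < Om := om_isLimit.pos

theorem succ_lt_om {γ : Ordinal.{u}} (h : γ < Om) : γ + 1 < Om := by
  rw [add_one_eq_succ]; exact om_isLimit.succ_lt h

theorem card_le_of_lt_om {γ : Ordinal.{u}} (h : γ < Om) : γ.card ≤ Cardinal.aleph0 := by
  have : γ.card < Cardinal.aleph 1 := Cardinal.lt_ord.mp h
  rwa [← Cardinal.succ_aleph0, Order.lt_succ_iff] at this

/-- enumeration of the ordinals below `γ` -/
def enum0 (γ : Ordinal.{u}) : ℕ → Ordinal.{u} :=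
  if h : ∃ f : ℕ → Ordinal.{u}, Set.Iio γ ⊆ Set.range f then h.choose else fun _ => 0

theorem enum0_spec {γ : Ordinal.{u}} (h : γ < Om) : Set.Iio γ ⊆ Set.range (enum0 γ) := by
  have hex : ∃ f : ℕ → Ordinal.{u}, Set.Iio γ ⊆ Set.range f := by
    rcases eq_or_ne γ 0 with rfl | hne
    · exact ⟨fun _ => 0, by simp⟩
    · have h1 : Nonempty γ.ToType := nonempty_toType_iff.2 hne
      have h2 : Countable γ.ToType := by
        rw [← Cardinal.mk_le_aleph0_iff, Cardinal.mk_toType]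
        exact card_le_of_lt_om h
      obtain ⟨g, hg⟩ := exists_surjective_nat γ.ToType
      refine ⟨fun k => ((ToType.mk (o := γ)).symm (g k) : Ordinal), ?_⟩
      rintro x hx
      obtain ⟨k, hk⟩ := hg (ToType.mk (o := γ) ⟨x, hx⟩)
      refine ⟨k, ?_⟩
      show ((ToType.mk (o := γ)).symm (g k) : Ordinal) = x
      rw [hk, OrderIso.symm_apply_apply]
  rw [enum0, dif_pos hex]
  exact hex.choose_spec

variable {n : ℕ} (χ : Ordinal.{u} → Ordinal.{u} → Fin n)

/-- the set of ordinals `β < ω₁` realizing the finite pattern `v` -/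
def Bset (v : List (Ordinal.{u} × Fin n)) : Set Ordinal.{u} :=
  {β | β < Om ∧ ∀ p ∈ v, p.1 < β ∧ χ p.1 β = p.2}

theorem lt_om_of_mem_Bset {v} {β} (h : β ∈ Bset χ v) : β < Om := h.1

/-- a witness above `β` in `Bset v`, when one exists -/
def w (v : List (Ordinal.{u} × Fin n)) (β : Ordinal.{u}) : Ordinal.{u} :=
  if h : ∃ x ∈ Bset χ v, β < x then h.choose else 0

theorem w_spec {v} {β} (h : ∃ x ∈ Bset χ v, β < x) :
    w χ v β ∈ Bset χ v ∧ β < w χ v β := by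
  rw [w, dif_pos h]; exact h.choose_spec

theorem w_lt_om (v) (β) : w χ v β < Om := by
  rw [w]
  split
  · next h => exact (h.choose_spec).1.1
  · exact om_pos

/-- a strict bound for `Bset v`, when a bound below `ω₁` exists -/
def bdv (v : List (Ordinal.{u} × Fin n)) : Ordinal.{u} :=
  if h : ∃ β, β < Om ∧ ∀ x ∈ Bset χ v, x < β then h.choose else 0

theorem bdv_spec {v} (h : ∃ β, β < Om ∧ ∀ x ∈ Bset χ v, x < β) :
    ∀ x ∈ Bset χ v, x < bdv χ v := by
  rw [bdv, dif_pos h]; exact h.choose_spec.2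

theorem bdv_lt_om (v) : bdv χ v < Om := by
  rw [bdv]
  split
  · next h => exact h.choose_spec.1
  · exact om_pos

/-- decode a list of codes into a pattern, using `enum0 γ` -/
def liftv (γ : Ordinal.{u}) (l : List (ℕ × Fin n)) : List (Ordinal.{u} × Fin n) :=
  l.map (fun p => (enum0 γ p.1, p.2))

theorem exists_code {γ : Ordinal.{u}} (hγ : γ < Om) :
    ∀ (v : List (Ordinal.{u} × Fin n)), (∀ p ∈ v, p.1 < γ) →
      ∃ l : List (ℕ × Fin n), liftv γ l = v := by
  intro v
  induction v with
  | nil => exact fun _ => ⟨[], rfl⟩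
  | cons p v ih =>
    intro hv
    obtain ⟨l, hl⟩ := ih (fun q hq => hv q (List.mem_cons_of_mem _ hq))
    obtain ⟨k, hk⟩ := enum0_spec hγ (hv p List.mem_cons_self : p.1 ∈ Set.Iio γ)
    refine ⟨(k, p.2) :: l, ?_⟩
    show (enum0 γ k, p.2) :: liftv γ l = p :: v
    rw [hk, hl, Prod.mk.eta]

/-- the closure function -/
def g (γ : Ordinal.{u}) : Ordinal.{u} :=
  ⨆ q : List (ℕ × Fin n) × ℕ,
    max (γ + 1) (max (w χ (liftv γ q.1) (enum0 γ q.2) + 1) (bdv χ (liftv γ q.1) + 1))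

theorem g_lt_om {γ : Ordinal.{u}} (hγ : γ < Om) : g χ γ < Om := by
  apply Cardinal.iSup_lt_ord_lift_of_isRegular Cardinal.isRegular_aleph_one
  · exact (Cardinal.lift_le.2 Cardinal.mk_le_aleph0).trans_lt
      (by rw [Cardinal.lift_aleph0]; exact Cardinal.aleph0_lt_aleph_one)
  · intro q
    exact max_lt (succ_lt_om hγ) (max_lt (succ_lt_om (w_lt_om χ _ _)) (succ_lt_om (bdv_lt_om χ _)))

theorem lt_g (γ : Ordinal.{u}) : γ < g χ γ := by
  have h1 := Ordinal.le_iSup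
    (fun q : List (ℕ × Fin n) × ℕ =>
      max (γ + 1) (max (w χ (liftv γ q.1) (enum0 γ q.2) + 1) (bdv χ (liftv γ q.1) + 1)))
    (([], 0) : List (ℕ × Fin n) × ℕ)
  exact lt_of_lt_of_le (by rw [add_one_eq_succ]; exact Order.lt_succ γ)
    (le_trans (le_max_left _ _) h1)

theorem w_le_g {γ : Ordinal.{u}} (hγ : γ < Om) {v} (hv : ∀ p ∈ v, p.1 < γ)
    {β} (hβ : β < γ) : w χ v β + 1 ≤ g χ γ := by
  obtain ⟨l, hl⟩ := exists_code hγ v hv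
  obtain ⟨k, hk⟩ := enum0_spec hγ (hβ : β ∈ Set.Iio γ)
  have := Ordinal.le_iSup
    (fun q : List (ℕ × Fin n) × ℕ =>
      max (γ + 1) (max (w χ (liftv γ q.1) (enum0 γ q.2) + 1) (bdv χ (liftv γ q.1) + 1))) (l, k)
  rw [show liftv γ (l, k).1 = v from hl, show enum0 γ (l, k).2 = β from hk] at this
  exact le_trans (le_trans (le_max_left _ _) (le_max_right _ _)) this

theorem bdv_le_g {γ : Ordinal.{u}} (hγ : γ < Om) {v} (hv : ∀ p ∈ v, p.1 < γ) :
    bdv χ v + 1 ≤ g χ γ := by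
  obtain ⟨l, hl⟩ := exists_code hγ v hv
  have := Ordinal.le_iSup
    (fun q : List (ℕ × Fin n) × ℕ =>
      max (γ + 1) (max (w χ (liftv γ q.1) (enum0 γ q.2) + 1) (bdv χ (liftv γ q.1) + 1))) (l, 0)
  rw [show liftv γ (l, 0).1 = v from hl] at this
  exact le_trans (le_trans (le_max_right _ _) (le_max_right _ _)) this

/-- the iterates of `g` -/
def d (k : ℕ) : Ordinal.{u} := (g χ)^[k] 0

theorem d_zero : d χ 0 = 0 := rfl

theorem d_succ (k : ℕ) : d χ (k + 1) = g χ (d χ k) := Function.iterate_succ_apply' _ _ _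

theorem d_lt_om (k : ℕ) : d χ k < Om := by
  induction k with
  | zero => exact om_pos
  | succ k ih => rw [d_succ]; exact g_lt_om χ ih

theorem d_strictMono : StrictMono (d χ) := by
  apply strictMono_nat_of_lt_succ
  intro k
  rw [d_succ]
  exact lt_g χ _

/-- the closure point -/
def dl : Ordinal.{u} := ⨆ k, d χ k

theorem dl_lt_om : dl χ < Om := by
  apply Cardinal.iSup_lt_ord_lift_of_isRegular Cardinal.isRegular_aleph_one
  · exact (Cardinal.lift_le.2 Cardinal.mk_le_aleph0).trans_lt
      (by rw [Cardinal.lift_aleph0]; exact Cardinal.aleph0_lt_aleph_one)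
  · exact d_lt_om χ

theorem d_lt_dl (k : ℕ) : d χ k < dl χ :=
  lt_of_lt_of_le (d_strictMono χ (Nat.lt_succ_self k)) (Ordinal.le_iSup (d χ) (k + 1))

theorem dl_pos : 0 < dl χ := by
  have := d_lt_dl χ 0
  rwa [d_zero] at this

theorem d_succ_le_dl (k : ℕ) : d χ (k + 1) ≤ dl χ := Ordinal.le_iSup (d χ) _

theorem exists_dk {γ : Ordinal.{u}} (h : γ < dl χ) : ∃ k, γ < d χ k :=
  Ordinal.lt_iSup_iff.mp h

theorem exists_dk_list (v : List (Ordinal.{u} × Fin n)) (hv : ∀ p ∈ v, p.1 < dl χ) :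
    ∃ k, ∀ p ∈ v, p.1 < d χ k := by
  induction v with
  | nil => exact ⟨0, by simp⟩
  | cons p v ih =>
    obtain ⟨k1, hk1⟩ := ih (fun q hq => hv q (List.mem_cons_of_mem _ hq))
    obtain ⟨k2, hk2⟩ := exists_dk χ (hv p List.mem_cons_self)
    refine ⟨max k1 k2, ?_⟩
    intro q hq
    rcases List.mem_cons.mp hq with rfl | hq
    · exact lt_of_lt_of_le hk2 ((d_strictMono χ).monotone (le_max_right _ _))
    · exact lt_of_lt_of_le (hk1 q hq) ((d_strictMono χ).monotone (le_max_left _ _))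

/-- if `dl` realizes a pattern with entries below `dl`, the pattern is realized unboundedly -/
theorem unb_of_mem (v : List (Ordinal.{u} × Fin n)) (hv : ∀ p ∈ v, p.1 < dl χ)
    (hδ : dl χ ∈ Bset χ v) : ∀ β, β < Om → ∃ x ∈ Bset χ v, β < x := by
  by_contra h
  push_neg at h
  obtain ⟨β, hβ, hb⟩ := h
  have hbd : ∃ β', β' < Om ∧ ∀ x ∈ Bset χ v, x < β' :=
    ⟨β + 1, succ_lt_om hβ, fun x hx => lt_of_le_of_lt (hb x hx) (lt_add_one β)⟩
  have h1 : dl χ < bdv χ v := bdv_spec χ hbd _ hδ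
  obtain ⟨k, hk⟩ := exists_dk_list χ v hv
  have h2 : bdv χ v + 1 ≤ g χ (d χ k) := bdv_le_g χ (d_lt_om χ k) hk
  rw [← d_succ] at h2
  have h3 : bdv χ v < dl χ :=
    lt_of_lt_of_le (lt_of_lt_of_le (lt_add_one _) h2) (d_succ_le_dl χ k)
  exact absurd (h1.trans h3) (lt_irrefl _)

/-- reflection: an unboundedly realized pattern with entries below `dl` is realized
cofinally below `dl` -/
theorem exists_mid (v : List (Ordinal.{u} × Fin n)) (hv : ∀ p ∈ v, p.1 < dl χ)
    (hu : ∀ β, β < Om → ∃ x ∈ Bset χ v, β < x) {β} (hβ : β < dl χ) :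
    ∃ x ∈ Bset χ v, β < x ∧ x < dl χ := by
  obtain ⟨k1, hk1⟩ := exists_dk_list χ v hv
  obtain ⟨k2, hk2⟩ := exists_dk χ hβ
  set k := max k1 k2 with hk
  have hvk : ∀ p ∈ v, p.1 < d χ k :=
    fun p hp => lt_of_lt_of_le (hk1 p hp) ((d_strictMono χ).monotone (le_max_left _ _))
  have hβk : β < d χ k := lt_of_lt_of_le hk2 ((d_strictMono χ).monotone (le_max_right _ _))
  have hw := w_spec χ (hu β (hβ.trans (dl_lt_om χ)))
  have h2 : w χ v β + 1 ≤ g χ (d χ k) := w_le_g χ (d_lt_om χ k) hvk hβk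
  rw [← d_succ] at h2
  exact ⟨w χ v β, hw.1, hw.2,
    lt_of_lt_of_le (lt_of_lt_of_le (lt_add_one _) h2) (d_succ_le_dl χ k)⟩

/-- list of ordinals paired with colors from `dl` -/
def vof (l : List Ordinal.{u}) : List (Ordinal.{u} × Fin n) :=
  l.map fun α => (α, χ α (dl χ))

/-- pick the next element of the sequence -/
def pick (l : List Ordinal.{u}) : Ordinal.{u} :=
  if h : ∃ x ∈ Bset χ (vof χ l), x < dl χ then h.choose else 0

theorem pick_spec (l : List Ordinal.{u}) (hl : ∀ y ∈ l, y < dl χ) :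
    pick χ l ∈ Bset χ (vof χ l) ∧ pick χ l < dl χ := by
  have hv : ∀ p ∈ vof χ l, p.1 < dl χ := by
    intro p hp
    obtain ⟨α, hα, rfl⟩ := List.mem_map.mp hp
    exact hl α hα
  have hδ : dl χ ∈ Bset χ (vof χ l) := by
    refine ⟨dl_lt_om χ, ?_⟩
    intro p hp
    obtain ⟨α, hα, rfl⟩ := List.mem_map.mp hp
    exact ⟨hl α hα, rfl⟩
  have hu := unb_of_mem χ (vof χ l) hv hδ
  obtain ⟨x, hx1, _, hx3⟩ := exists_mid χ (vof χ l) hv hu (dl_pos χ)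
  have h : ∃ x ∈ Bset χ (vof χ l), x < dl χ := ⟨x, hx1, hx3⟩
  rw [pick, dif_pos h]
  exact h.choose_spec

/-- initial segments of the sequence -/
def seq : ℕ → List Ordinal.{u}
  | 0 => []
  | k + 1 => seq k ++ [pick χ (seq k)]

/-- the sequence -/
def a (k : ℕ) : Ordinal.{u} := pick χ (seq χ k)

theorem seq_lt (k : ℕ) : ∀ y ∈ seq χ k, y < dl χ := by
  induction k with
  | zero => simp [seq]
  | succ k ih =>
    intro y hy
    rcases List.mem_append.mp hy with hy | hy
    · exact ih y hy
    · rw [List.mem_singleton.mp hy]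
      exact (pick_spec χ (seq χ k) ih).2

theorem a_mem (k : ℕ) : a χ k ∈ Bset χ (vof χ (seq χ k)) :=
  (pick_spec χ (seq χ k) (seq_lt χ k)).1

theorem a_lt_dl (k : ℕ) : a χ k < dl χ :=
  (pick_spec χ (seq χ k) (seq_lt χ k)).2

theorem a_mem_seq {j k : ℕ} (h : j < k) : a χ j ∈ seq χ k := by
  induction k with
  | zero => omega
  | succ k ih =>
    show a χ j ∈ seq χ k ++ [pick χ (seq χ k)]
    rcases Nat.lt_succ_iff_lt_or_eq.mp h with h | rfl
    · exact List.mem_append.mpr (Or.inl (ih h))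
    · exact List.mem_append.mpr (Or.inr (List.mem_singleton.mpr rfl))

theorem a_key {j k : ℕ} (h : j < k) :
    a χ j < a χ k ∧ χ (a χ j) (a χ k) = χ (a χ j) (dl χ) := by
  have hm := a_mem χ k
  have : (a χ j, χ (a χ j) (dl χ)) ∈ vof χ (seq χ k) :=
    List.mem_map.mpr ⟨a χ j, a_mem_seq χ h, rfl⟩
  exact hm.2 _ this

theorem a_strictMono : StrictMono (a χ) := fun _ _ h => (a_key χ h).1

end Stmt7

end Stmt7Aux

/-- The order type of a set of ordinals. -/
noncomputable def otype (H : Set Ordinal) : Ordinal :=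
  Ordinal.type (Subrel ((· < ·) : Ordinal → Ordinal → Prop) (· ∈ H))

/-- For every positive finite n, ω₁ → (ω + 1)²_n. -/
theorem stmt_7 (n : ℕ) (hn : 0 < n) (χ : Ordinal → Ordinal → Fin n) :
    ∃ H : Set Ordinal, H ⊆ Set.Iio (Cardinal.aleph 1).ord ∧
      otype H = Ordinal.omega0 + 1 ∧
      ∃ i : Fin n, ∀ a ∈ H, ∀ b ∈ H, a < b → χ a b = i := by
  classical
  set δ := Stmt7.dl χ with hδ
  -- pigeonhole on the colors to the top point
  have f : ℕ → Fin n := fun m => χ (Stmt7.a χ m) δ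
  obtain ⟨i, hi⟩ := Finite.exists_infinite_fiber (fun m => χ (Stmt7.a χ m) δ)
  have hS : {m : ℕ | χ (Stmt7.a χ m) δ = i}.Infinite := by
    rw [← Set.infinite_coe_iff]
    exact hi
  set p : ℕ → Prop := fun m => χ (Stmt7.a χ m) δ = i with hp
  have hnth_mono : StrictMono (Nat.nth p) := Nat.nth_strictMono hS
  have hnth_mem : ∀ k, χ (Stmt7.a χ (Nat.nth p k)) δ = i :=
    fun k => Nat.nth_mem_of_infinite hS k
  set b : ℕ → Ordinal := fun k => Stmt7.a χ (Nat.nth p k) with hb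
  have hbmono : StrictMono b := fun j k h => (Stmt7.a_strictMono χ) (hnth_mono h)
  have hblt : ∀ k, b k < δ := fun k => Stmt7.a_lt_dl χ _
  have hbcol : ∀ j k, j < k → χ (b j) (b k) = i := by
    intro j k h
    rw [hb]
    simp only
    rw [(Stmt7.a_key χ (hnth_mono h)).2]
    exact hnth_mem j
  have hbtop : ∀ k, χ (b k) δ = i := hnth_mem
  refine ⟨Set.range b ∪ {δ}, ?_, ?_, i, ?_⟩
  · rintro x (⟨k, rfl⟩ | rfl)
    · exact (hblt k).trans (Stmt7.dl_lt_om χ)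
    · exact Stmt7.dl_lt_om χ
  · -- order type computation
    have hmem1 : ∀ k, b k ∈ Set.range b ∪ {δ} := fun k => Or.inl ⟨k, rfl⟩
    have hmem2 : δ ∈ Set.range b ∪ {δ} := Or.inr rfl
    set H : Set Ordinal := Set.range b ∪ {δ} with hH
    let f : ℕ ⊕ Unit → H := fun x => Sum.elim (fun k => ⟨b k, hmem1 k⟩) (fun _ => ⟨δ, hmem2⟩) x
    have hfinj : Function.Injective f := by
      rintro (j | u) (k | v) h
      · simp only [f, Sum.elim_inl, Subtype.mk.injEq] at h
        exact congrArg Sum.inl (hbmono.injective h)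
      · simp only [f, Sum.elim_inl, Sum.elim_inr, Subtype.mk.injEq] at h
        exact absurd h (ne_of_lt (hblt j))
      · simp only [f, Sum.elim_inl, Sum.elim_inr, Subtype.mk.injEq] at h
        exact absurd h.symm (ne_of_lt (hblt k))
      · cases u; cases v; rfl
    have hfsurj : Function.Surjective f := by
      rintro ⟨x, hx | hx⟩
      · obtain ⟨k, rfl⟩ := hx
        exact ⟨Sum.inl k, rfl⟩
      · exact ⟨Sum.inr (), Subtype.ext ((Set.mem_singleton_iff.mp hx).symm)⟩
    let e : Sum.Lex ((· < ·) : ℕ → ℕ → Prop) (@emptyRelation Unit) ≃r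
        Subrel ((· < ·) : Ordinal → Ordinal → Prop) (· ∈ H) :=
      RelIso.mk (Equiv.ofBijective f ⟨hfinj, hfsurj⟩) (by
        rintro (j | u) (k | v)
        · show (b j < b k) ↔ _
          rw [hbmono.lt_iff_lt, Sum.lex_inl_inl]
        · show (b j < δ) ↔ _
          simp only [hblt j, true_iff]
          exact Sum.Lex.sep _ _
        · show (δ < b k) ↔ _
          simp only [Sum.lex_inr_inl, iff_false]
          exact not_lt.mpr (hblt k).le
        · show (δ < δ) ↔ _
          simp only [lt_irrefl, false_iff, Sum.lex_inr_inr]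
          exact not_false
        )
    have key := RelIso.ordinal_lift_type_eq e
    rw [Ordinal.type_sum_lex, Ordinal.type_nat_lt, Ordinal.type_unit, Ordinal.lift_add,
      Ordinal.lift_omega0, Ordinal.lift_one, Ordinal.lift_id'] at key
    rw [otype]
    exact key.symm
  · rintro x (⟨j, rfl⟩ | rfl) y (⟨k, rfl⟩ | rfl) hxy
    · have : j < k := by
        by_contra h
        push_neg at h
        exact absurd hxy (not_lt.mpr (hbmono.monotone h))
      exact hbcol j k this
    · exact hbtop j
    · exact absurd hxy (not_lt.mpr (hblt k).le)
    · exact absurd hxy (lt_irrefl _)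
end

section
/- For every positive finite n, ω₁ → (ω₁, (ω + 1)_n)²: for every coloring of pairs of countable ordinals in n + 1 colors, either there is an uncountable set homogeneous in color 0, or there is a set of order type ω + 1 homogeneous in some nonzero color. -/
universe u

open Ordinal Cardinal Set
set_option maxHeartbeats 1000000

def homogF {γ : Type*} (χ : Ordinal.{u} → Ordinal.{u} → γ) (z : γ) (A : Set Ordinal.{u}) :
    ∀ y : Ordinal.{u}, (∀ x, x < y → Prop) → Prop :=
  fun y ih => y ∈ A ∧ ∀ x, ∀ h : x < y, ih x h → χ x y = z

def homog {γ : Type*} (χ : Ordinal.{u} → Ordinal.{u} → γ) (z : γ) (A : Set Ordinal.{u}) :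
    Set Ordinal.{u} :=
  { y | WellFounded.fix Ordinal.lt_wf (homogF χ z A) y }

theorem homog_iff {γ : Type*} {χ : Ordinal.{u} → Ordinal.{u} → γ} {z : γ} {A : Set Ordinal.{u}}
    {y : Ordinal.{u}} :
    y ∈ homog χ z A ↔ y ∈ A ∧ ∀ x ∈ homog χ z A, x < y → χ x y = z := by
  have h : Ordinal.lt_wf.fix (homogF χ z A) y
      = homogF χ z A y (fun x _ => Ordinal.lt_wf.fix (homogF χ z A) x) :=
    WellFounded.fix_eq _ _ _
  exact Iff.trans (Iff.of_eq h)
    ⟨fun ⟨h1, h2⟩ => ⟨h1, fun x hx hlt => h2 x hlt hx⟩,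
      fun ⟨h1, h2⟩ => ⟨h1, fun x hlt hx => h2 x hx hlt⟩⟩

theorem homog_subset {γ : Type*} {χ : Ordinal.{u} → Ordinal.{u} → γ} {z : γ} {A : Set Ordinal.{u}} :
    homog χ z A ⊆ A := fun _ h => (homog_iff.1 h).1

theorem homog_homog {γ : Type*} {χ : Ordinal.{u} → Ordinal.{u} → γ} {z : γ} {A : Set Ordinal.{u}}
    {a b : Ordinal.{u}} (ha : a ∈ homog χ z A) (hb : b ∈ homog χ z A) (h : a < b) :
    χ a b = z := (homog_iff.1 hb).2 a ha h

theorem homog_maximal {γ : Type*} {χ : Ordinal.{u} → Ordinal.{u} → γ} {z : γ} {A : Set Ordinal.{u}}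
    {y : Ordinal.{u}} (hy : y ∈ A) (h : ∀ x ∈ homog χ z A, x < y → χ x y = z) :
    y ∈ homog χ z A := homog_iff.2 ⟨hy, h⟩

/-- Build a sequence where the `k`-th term may depend on all earlier terms. -/
noncomputable def mkSeq (F : (ℕ → Ordinal.{u}) → ℕ → Ordinal.{u}) : ℕ → Ordinal.{u}
  | k => F (fun j => if _ : j < k then mkSeq F j else 0) k
  termination_by k => k

theorem mkSeq_eq (F : (ℕ → Ordinal.{u}) → ℕ → Ordinal.{u}) (k : ℕ) :
    mkSeq F k = F (fun j => if _ : j < k then mkSeq F j else 0) k := by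
  rw [mkSeq]

theorem otype_mono {S T : Set Ordinal.{u}} (h : S ⊆ T) : otype S ≤ otype T :=
  RelEmbedding.ordinal_type_le ⟨⟨Set.inclusion h, Set.inclusion_injective h⟩, Iff.rfl⟩

theorem otype_Iio (o : Ordinal.{u}) : otype (Set.Iio o) = Ordinal.lift.{u+1} o := by
  rw [← Ordinal.typein_ordinal o]
  rfl

theorem otype_card (S : Set Ordinal.{u}) : (otype S).card = #S := Ordinal.card_type _

theorem lift_omega1 : Ordinal.lift.{u+1} (Cardinal.aleph 1).ord = (Cardinal.aleph 1).ord := by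
  rw [Cardinal.lift_ord, Cardinal.lift_aleph, Ordinal.lift_one]

theorem otype_eq_omega1 {S : Set Ordinal.{u}} (hsub : S ⊆ Set.Iio (Cardinal.aleph 1).ord)
    (hunc : ¬ S.Countable) : otype S = (Cardinal.aleph 1).ord := by
  apply le_antisymm
  · calc otype S ≤ otype (Set.Iio (Cardinal.aleph 1).ord) := otype_mono hsub
      _ = Ordinal.lift.{u+1} (Cardinal.aleph 1).ord := otype_Iio _
      _ = (Cardinal.aleph 1).ord := lift_omega1
  · rw [Cardinal.ord_le, otype_card]
    have h1 : ¬ (#S ≤ ℵ₀) := by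
      rw [Cardinal.mk_le_aleph0_iff, Set.countable_coe_iff]
      exact hunc
    rw [← Cardinal.succ_aleph0]
    exact Order.succ_le_of_lt (not_le.1 h1)

theorem otype_insert_top {S : Set Ordinal.{u}} {δ : Ordinal.{u}} (h : ∀ a ∈ S, a < δ) :
    otype (S ∪ {δ}) = otype S + 1 := by
  have hmap : ∀ (a : (S : Set Ordinal) ⊕ ({δ} : Set Ordinal)),
      (Sum.elim (fun x : S => x.1) (fun x : ({δ} : Set Ordinal) => x.1) a) ∈ S ∪ {δ} := by
    rintro (a | a)
    · exact Or.inl a.2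
    · exact Or.inr a.2
  let f : (S : Set Ordinal) ⊕ ({δ} : Set Ordinal) → (S ∪ {δ} : Set Ordinal) :=
    fun a => ⟨_, hmap a⟩
  have hbij : Function.Bijective f := by
    constructor
    · rintro (a | a) (b | b) hab
      · have h2' := congrArg Subtype.val hab
        have h2 : (a : Ordinal) = (b : Ordinal) := h2'
        exact congrArg Sum.inl (Subtype.ext h2)
      · have h2' := congrArg Subtype.val hab
        have h2 : (a : Ordinal) = (b : Ordinal) := h2'
        exact absurd (h a.1 a.2)
          (by rw [h2, show (b : Ordinal) = δ from b.2]; exact lt_irrefl _)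
      · have h2' := congrArg Subtype.val hab
        have h2 : (a : Ordinal) = (b : Ordinal) := h2'
        exact absurd (h b.1 b.2)
          (by rw [← h2, show (a : Ordinal) = δ from a.2]; exact lt_irrefl _)
      · have h2' := congrArg Subtype.val hab
        have h2 : (a : Ordinal) = (b : Ordinal) := h2'
        exact congrArg Sum.inr (Subtype.ext h2)
    · rintro ⟨x, hx | hx⟩
      · exact ⟨Sum.inl ⟨x, hx⟩, rfl⟩
      · exact ⟨Sum.inr ⟨x, hx⟩, rfl⟩
  have hiso : Nonempty ((Sum.Lex (Subrel ((· < ·) : Ordinal → Ordinal → Prop) (· ∈ S))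
      (Subrel ((· < ·) : Ordinal → Ordinal → Prop) (· ∈ ({δ} : Set Ordinal))))
      ≃r Subrel ((· < ·) : Ordinal → Ordinal → Prop) (· ∈ (S ∪ {δ} : Set Ordinal))) := by
    refine ⟨RelIso.mk (Equiv.ofBijective f hbij) ?_⟩
    rintro (a | a) (b | b)
    · show (a : Ordinal) < (b : Ordinal) ↔ _
      rw [Sum.lex_inl_inl]
      exact Iff.rfl
    · show (a : Ordinal) < (b : Ordinal) ↔ _
      exact iff_of_true (by rw [show (b : Ordinal) = δ from b.2]; exact h a.1 a.2)
        (Sum.Lex.sep _ _)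
    · show (a : Ordinal) < (b : Ordinal) ↔ _
      refine iff_of_false ?_ (by simp)
      rw [show (a : Ordinal) = δ from a.2]
      exact asymm (h b.1 b.2)
    · show (a : Ordinal) < (b : Ordinal) ↔ _
      refine iff_of_false ?_ ?_
      · rw [show (a : Ordinal) = δ from a.2, show (b : Ordinal) = δ from b.2]
        exact lt_irrefl _
      · rw [Sum.lex_inr_inr]
        show ¬ ((a : Ordinal) < (b : Ordinal))
        rw [show (a : Ordinal) = δ from a.2, show (b : Ordinal) = δ from b.2]
        exact lt_irrefl _
  have h1 : otype (S ∪ {δ}) = otype S + Ordinal.type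
      (Subrel ((· < ·) : Ordinal → Ordinal → Prop) (· ∈ ({δ} : Set Ordinal))) := by
    simp only [otype]
    rw [← Ordinal.type_sum_lex]
    exact (Ordinal.type_eq.2 hiso).symm
  rw [h1, Ordinal.type_eq_one_iff_unique.2 ⟨inferInstance⟩]

theorem otype_range_omega {y : ℕ → Ordinal.{u}} (hy : StrictMono y) :
    otype (Set.range y) = Ordinal.omega0 := by
  have hbij : Function.Bijective (fun k : ULift.{u+1} ℕ =>
      (⟨y k.down, Set.mem_range_self _⟩ : (Set.range y : Set Ordinal))) := by
    constructor
    · intro a b hab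
      have h2 := congrArg Subtype.val hab
      exact ULift.ext _ _ (hy.injective h2)
    · rintro ⟨x, k, rfl⟩
      exact ⟨⟨k⟩, rfl⟩
  have hiso : Nonempty ((ULift.down.{u+1} ⁻¹'o ((· < ·) : ℕ → ℕ → Prop))
      ≃r Subrel ((· < ·) : Ordinal → Ordinal → Prop) (· ∈ Set.range y)) := by
    refine ⟨RelIso.mk (Equiv.ofBijective _ hbij) ?_⟩
    intro a b
    exact hy.lt_iff_lt
  rw [otype, ← Ordinal.type_eq.2 hiso, Ordinal.type_uLift, Ordinal.type_nat_lt,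
    Ordinal.lift_omega0]

theorem countable_Iio_of_lt_omega1 {β : Ordinal.{u}} (hβ : β < (Cardinal.aleph 1).ord) :
    (Set.Iio β).Countable := by
  rw [Cardinal.countable_iff_lt_aleph_one, Ordinal.mk_Iio_ordinal]
  have h1 : β.card < Cardinal.aleph 1 := Cardinal.lt_ord.1 hβ
  have h2 : Cardinal.lift.{u+1} β.card < Cardinal.lift.{u+1} (Cardinal.aleph 1) :=
    Cardinal.lift_lt.2 h1
  rwa [Cardinal.lift_aleph, Ordinal.lift_one] at h2

theorem exists_bound {S : Set Ordinal.{u}} (hc : S.Countable)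
    (hS : ∀ x ∈ S, x < (Cardinal.aleph 1).ord) :
    ∃ β, β < (Cardinal.aleph 1).ord ∧ ∀ x ∈ S, x < β := by
  rcases S.eq_empty_or_nonempty with rfl | hne
  · exact ⟨1, Ordinal.one_lt_of_isSuccLimit (Cardinal.isSuccLimit_ord (Cardinal.aleph0_le_aleph 1)), by simp⟩
  · obtain ⟨f, rfl⟩ := hc.exists_eq_range hne
    refine ⟨⨆ k, f k + 1, ?_, ?_⟩
    · rw [Cardinal.ord_aleph]
      refine Ordinal.iSup_lt_omega_one fun k => ?_
      rw [← Cardinal.ord_aleph]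
      rw [Ordinal.add_one_eq_succ]
      exact (Cardinal.isSuccLimit_ord (Cardinal.aleph0_le_aleph 1)).succ_lt (hS _ (Set.mem_range_self k))
    · rintro x ⟨k, rfl⟩
      calc f k < f k + 1 := by rw [Ordinal.add_one_eq_succ]; exact Order.lt_succ _
        _ ≤ ⨆ k, f k + 1 := Ordinal.le_iSup (fun k => f k + 1) k

/-- For every positive finite n, ω₁ → (ω₁, (ω + 1)_n)². -/
theorem stmt_9 (n : ℕ) (hn : 0 < n) (χ : Ordinal → Ordinal → Fin (n + 1)) :
    (∃ H : Set Ordinal, H ⊆ Set.Iio (Cardinal.aleph 1).ord ∧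
      otype H = (Cardinal.aleph 1).ord ∧
      ∀ a ∈ H, ∀ b ∈ H, a < b → χ a b = 0) ∨
    (∃ i : Fin (n + 1), 1 ≤ (i : ℕ) ∧
      ∃ H : Set Ordinal, H ⊆ Set.Iio (Cardinal.aleph 1).ord ∧
        otype H = Ordinal.omega0 + 1 ∧
        ∀ a ∈ H, ∀ b ∈ H, a < b → χ a b = i) := by
  classical
  by_cases hcase : ∃ H : Set Ordinal, H ⊆ Set.Iio (Cardinal.aleph 1).ord ∧
      (∀ a ∈ H, ∀ b ∈ H, a < b → χ a b = 0) ∧ ¬ H.Countable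
  · obtain ⟨H, h1, h2, h3⟩ := hcase
    exact Or.inl ⟨H, h1, otype_eq_omega1 h1 h3, h2⟩
  have hsmall : ∀ H : Set Ordinal, H ⊆ Set.Iio (Cardinal.aleph 1).ord →
      (∀ a ∈ H, ∀ b ∈ H, a < b → χ a b = 0) → H.Countable :=
    fun H hs hh => by_contra fun hc => hcase ⟨H, hs, hh, hc⟩
  set Aset : List (Ordinal × Fin (n+1)) → Set Ordinal := fun l =>
    { α | α < (Cardinal.aleph 1).ord ∧ ∀ p ∈ l, p.1 < α ∧ χ p.1 α = p.2 } with hAdef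
  set B : List (Ordinal × Fin (n+1)) → Set Ordinal := fun l => homog χ 0 (Aset l) with hBdef
  have hBsub : ∀ l, B l ⊆ Set.Iio (Cardinal.aleph 1).ord := fun l x hx => (homog_subset hx).1
  have hBc : ∀ l, (B l).Countable := fun l =>
    hsmall _ (hBsub l) (fun a ha b hb hab => homog_homog ha hb hab)
  -- closure step
  have step : ∀ β, β < (Cardinal.aleph 1).ord → ∃ β', β' < (Cardinal.aleph 1).ord ∧ β < β' ∧
      ∀ l : List (Ordinal × Fin (n+1)), (∀ p ∈ l, p.1 < β) → ∀ x ∈ B l, x < β' := by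
    intro β hβ
    haveI : Countable (Set.Iio β : Set Ordinal) := (countable_Iio_of_lt_omega1 hβ).to_subtype
    obtain ⟨β', hβ'1, hβ'2⟩ := exists_bound
      (S := insert β (⋃ l : List (↥(Set.Iio β) × Fin (n+1)),
        B (l.map fun p => ((p.1 : Ordinal), p.2))))
      ((Set.countable_iUnion fun l => hBc _).insert β)
      (by
        rintro x (rfl | hx)
        · exact hβ
        · obtain ⟨l, hl⟩ := Set.mem_iUnion.1 hx
          exact hBsub _ hl)
    refine ⟨β', hβ'1, hβ'2 β (Set.mem_insert _ _), fun l hl x hx => ?_⟩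
    refine hβ'2 x (Set.mem_insert_of_mem _ ?_)
    have hex : ∃ l' : List (↥(Set.Iio β) × Fin (n+1)),
        (l'.map fun p => ((p.1 : Ordinal), p.2)) = l := by
      clear hx
      induction l with
      | nil => exact ⟨[], rfl⟩
      | cons p l ih =>
        obtain ⟨l', hl'⟩ := ih (fun q hq => hl q (List.mem_cons_of_mem _ hq))
        exact ⟨(⟨⟨p.1, hl p (List.mem_cons_self)⟩, p.2⟩ :: l'), by simp [hl']⟩
    obtain ⟨l', rfl⟩ := hex
    exact Set.mem_iUnion.2 ⟨l', hx⟩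
  -- iterate to get a closed δ
  set g : Ordinal → Ordinal :=
    fun β => if h : β < (Cardinal.aleph 1).ord then (step β h).choose else 0 with hgdef
  have hg : ∀ β, (h : β < (Cardinal.aleph 1).ord) → g β < (Cardinal.aleph 1).ord ∧ β < g β ∧
      ∀ l, (∀ p ∈ l, p.1 < β) → ∀ x ∈ B l, x < g β := by
    intro β hβ
    simp only [hgdef, dif_pos hβ]
    exact (step β hβ).choose_spec
  set ds : ℕ → Ordinal := fun m => g^[m] 0 with hdsdef
  have hds0 : (0 : Ordinal) < (Cardinal.aleph 1).ord := (Cardinal.isSuccLimit_ord (Cardinal.aleph0_le_aleph 1)).pos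
  have hdssucc : ∀ m, ds (m+1) = g (ds m) := fun m => Function.iterate_succ_apply' g m 0
  have hds1 : ∀ m, ds m < (Cardinal.aleph 1).ord := by
    intro m
    induction m with
    | zero => exact hds0
    | succ m ih => rw [hdssucc m]; exact (hg _ ih).1
  have hds2 : ∀ m, ds m < ds (m+1) := fun m => by
    rw [hdssucc m]; exact (hg _ (hds1 m)).2.1
  have hdsmono : StrictMono ds := strictMono_nat_of_lt_succ hds2
  set δ : Ordinal := ⨆ m, ds m with hδdef
  have hδω : δ < (Cardinal.aleph 1).ord := by
    have := hds1; simp only [Cardinal.ord_aleph] at this ⊢; exact Ordinal.iSup_lt_omega_one this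
  have hdsδ : ∀ m, ds m < δ := fun m => lt_of_lt_of_le (hds2 m) (Ordinal.le_iSup ds (m+1))
  have hclosure : ∀ l, (∀ p ∈ l, p.1 < δ) → ∀ x ∈ B l, x < δ := by
    intro l hl
    have hex : ∃ m, ∀ p ∈ l, p.1 < ds m := by
      induction l with
      | nil => exact ⟨0, by simp⟩
      | cons p l ih =>
        obtain ⟨m1, hm1⟩ := ih (fun q hq => hl q (List.mem_cons_of_mem _ hq))
        obtain ⟨m2, hm2⟩ := Ordinal.lt_iSup_iff.1
          (show p.1 < ⨆ m, ds m from hl p (List.mem_cons_self))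
        refine ⟨max m1 m2, fun q hq => ?_⟩
        rcases List.mem_cons.1 hq with rfl | hq
        · exact hm2.trans_le (hdsmono.monotone (le_max_right _ _))
        · exact (hm1 q hq).trans_le (hdsmono.monotone (le_max_left _ _))
    obtain ⟨m, hm⟩ := hex
    intro x hx
    have hlt : g (ds m) < δ := by rw [← hdssucc m]; exact hdsδ (m+1)
    exact ((hg _ (hds1 m)).2.2 l hm x hx).trans hlt
  -- the recursive sequence
  set F : (ℕ → Ordinal) → ℕ → Ordinal := fun prev k =>
    if h : ∃ z, z ∈ B ((List.range k).map fun j => (prev j, χ (prev j) δ)) ∧ χ z δ ≠ 0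
    then h.choose else 0 with hFdef
  set x : ℕ → Ordinal := mkSeq F with hxdef
  set L : ℕ → List (Ordinal × Fin (n+1)) :=
    fun k => (List.range k).map fun j => (x j, χ (x j) δ) with hLdef
  have hFspec : ∀ (prev : ℕ → Ordinal) (k : ℕ),
      (∃ z, z ∈ B ((List.range k).map fun j => (prev j, χ (prev j) δ)) ∧ χ z δ ≠ 0) →
      F prev k ∈ B ((List.range k).map fun j => (prev j, χ (prev j) δ)) ∧
        χ (F prev k) δ ≠ 0 := by
    intro prev k h
    have : F prev k = h.choose := by simp only [hFdef]; exact dif_pos h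
    rw [this]
    exact h.choose_spec
  have main : ∀ k, x k ∈ B (L k) ∧ x k < δ ∧ χ (x k) δ ≠ 0 := by
    intro k
    induction k using Nat.strong_induction_on with
    | _ k ih =>
      have hLcomp : ∀ p ∈ L k, p.1 < δ := by
        intro p hp
        simp only [hLdef, List.mem_map, List.mem_range] at hp
        obtain ⟨j, hj, rfl⟩ := hp
        exact (ih j hj).2.1
      have hδA : δ ∈ Aset (L k) := by
        refine ⟨hδω, fun p hp => ?_⟩
        simp only [hLdef, List.mem_map, List.mem_range] at hp
        obtain ⟨j, hj, rfl⟩ := hp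
        exact ⟨(ih j hj).2.1, rfl⟩
      have hE : ∃ z, z ∈ B (L k) ∧ χ z δ ≠ 0 := by
        by_contra hne
        push_neg at hne
        have hδB : δ ∈ B (L k) :=
          homog_maximal hδA (fun z hz _ => hne z hz)
        exact absurd (hclosure (L k) hLcomp δ hδB) (lt_irrefl δ)
      have hlist : ((List.range k).map fun j =>
          ((fun j => if _ : j < k then x j else 0) j,
            χ ((fun j => if _ : j < k then x j else 0) j) δ)) = L k := by
        simp only [hLdef]
        apply List.map_congr_left
        intro j hj
        rw [List.mem_range] at hj
        simp [dif_pos hj]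
      have hE' : ∃ z, z ∈ B ((List.range k).map fun j =>
          ((fun j => if _ : j < k then x j else 0) j,
            χ ((fun j => if _ : j < k then x j else 0) j) δ)) ∧ χ z δ ≠ 0 := by
        rw [hlist]; exact hE
      have h1 : x k = F (fun j => if _ : j < k then x j else 0) k := mkSeq_eq F k
      have happly := hFspec (fun j => if _ : j < k then x j else 0) k hE'
      rw [← h1] at happly
      rw [hlist] at happly
      exact ⟨happly.1, hclosure (L k) hLcomp (x k) happly.1, happly.2⟩
  have hxA : ∀ k, x k ∈ Aset (L k) := fun k => homog_subset (main k).1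
  have hmono : StrictMono x := fun j k hjk =>
    ((hxA k).2 (x j, χ (x j) δ) (List.mem_map.2 ⟨j, List.mem_range.2 hjk, rfl⟩)).1
  have hχd : ∀ j k, j < k → χ (x j) (x k) = χ (x j) δ := fun j k hjk =>
    ((hxA k).2 (x j, χ (x j) δ) (List.mem_map.2 ⟨j, List.mem_range.2 hjk, rfl⟩)).2
  -- pigeonhole
  have hfib : ∃ i : Fin (n+1), {k | χ (x k) δ = i}.Infinite := by
    by_contra hfin
    push_neg at hfin
    have hsub : (Set.univ : Set ℕ) ⊆ ⋃ i : Fin (n+1), {k | χ (x k) δ = i} :=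
      fun k _ => Set.mem_iUnion.2 ⟨_, rfl⟩
    exact Set.infinite_univ ((Set.finite_iUnion hfin).subset hsub)
  obtain ⟨i, hi⟩ := hfib
  have hi0 : i ≠ 0 := by
    obtain ⟨k, hk⟩ := hi.nonempty
    exact fun h => (main k).2.2 (by rw [hk, h])
  have hi1 : 1 ≤ (i : ℕ) := by
    refine Nat.one_le_iff_ne_zero.2 fun h => hi0 ?_
    apply Fin.ext
    simpa using h
  set N : ℕ → ℕ := Nat.nth (fun k => χ (x k) δ = i) with hNdef
  have hNmono : StrictMono N := Nat.nth_strictMono hi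
  have hNmem : ∀ m, χ (x (N m)) δ = i := fun m => Nat.nth_mem_of_infinite hi m
  set y : ℕ → Ordinal := fun m => x (N m) with hydef
  have hymono : StrictMono y := hmono.comp hNmono
  have hyδ : ∀ a ∈ Set.range y, a < δ := by rintro a ⟨m, rfl⟩; exact (main (N m)).2.1
  refine Or.inr ⟨i, hi1, Set.range y ∪ {δ}, ?_, ?_, ?_⟩
  · rintro a (⟨m, rfl⟩ | ha)
    · exact lt_trans ((main (N m)).2.1) hδω
    · exact (show a = δ from ha) ▸ hδω
  · rw [otype_insert_top hyδ, otype_range_omega hymono]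
  · rintro a (ha | ha) b (hb | hb) hab
    · obtain ⟨ma, rfl⟩ := ha
      obtain ⟨mb, rfl⟩ := hb
      have hm : ma < mb := hymono.lt_iff_lt.1 hab
      have h3 : χ (x (N ma)) (x (N mb)) = χ (x (N ma)) δ := hχd _ _ (hNmono hm)
      rw [show y ma = x (N ma) from rfl, show y mb = x (N mb) from rfl, h3, hNmem ma]
    · obtain ⟨ma, rfl⟩ := ha
      rw [show b = δ from hb, show y ma = x (N ma) from rfl, hNmem ma]
    · obtain ⟨mb, rfl⟩ := hb
      exact absurd hab (by rw [show a = δ from ha]; exact not_lt.2 (main (N mb)).2.1.le)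
    · rw [show a = δ from ha, show b = δ from hb] at hab
      exact absurd hab (lt_irrefl _)
end
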